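/- Let (Ω, P) be a probability space and g_1, …, g_N (N ≥ 1) independent exponentially distributed random variables with common mean ḡ > 0. Let γ̄ > 0, L > 0, α_c ∈ (0,1), α_p > 0, β ≥ 0, γ_th,c > 0, γ_th,p > 0 with (1−α_c)·γ_th,c < α_c and β·γ_th,p < α_p, and set g = max_i g_i, γ̂_c = γ_th,c/(γ̄·L·(α_c − (1−α_c)·γ_th,c)), γ̂_p = γ_th,p/(γ̄·L·(α_p − β·γ_th,p)), γ_th = max(γ̂_c, γ̂_p). Then the outage probability P({ω : ¬( (γ̄·α_c·L·g)/(γ̄·(1−α_c)·L·g + 1) > γ_th,c ∧ (γ̄·α_p·L·g)/(γ̄·β·L·g + 1) > γ_th,p )}) equals (1 − e^{−γ_th/ḡ})^N. -/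

import Mathlib

/-!
Each SINR is increasing in the gain, so `γ_c(g) > γ_th,c` and `γ_p(g) > γ_th,p` amount to
`g > γ̂_c` and `g > γ̂_p`. Outage is therefore the event `max_i g_i ≤ γ_th`, i.e. the
intersection of the independent events `g_i ≤ γ_th`, each of probability `1 - e^{-γ_th/ḡ}`.
-/

open MeasureTheory ProbabilityTheory

lemma sinr_gt_iff {γbar L α c t x : ℝ} (hγ : 0 < γbar) (hL : 0 < L) (hc : 0 ≤ c)
    (hx : 0 ≤ x) (hct : c * t < α) :
    γbar * α * L * x / (γbar * c * L * x + 1) > t ↔ t / (γbar * L * (α - c * t)) < x := by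
  have hden : 0 < γbar * c * L * x + 1 := by positivity
  have hcoef : 0 < γbar * L * (α - c * t) := mul_pos (mul_pos hγ hL) (sub_pos.2 hct)
  rw [gt_iff_lt, lt_div_iff₀ hden, div_lt_iff₀ hcoef]
  constructor <;> intro h <;> nlinarith

lemma ProbabilityTheory.iIndepFun.measure_sup'_le {Ω ι β : Type*} [MeasurableSpace Ω]
    {μ : Measure Ω} [Fintype ι] [LinearOrder β] [TopologicalSpace β] [OrderClosedTopology β]
    [MeasurableSpace β] [OpensMeasurableSpace β] {f : ι → Ω → β} (hf : iIndepFun f μ)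
    (hne : (Finset.univ : Finset ι).Nonempty) (t : β) :
    μ {ω | Finset.univ.sup' hne (fun i => f i ω) ≤ t} = ∏ i, μ {ω | f i ω ≤ t} := by
  have hinter : {ω | Finset.univ.sup' hne (fun i => f i ω) ≤ t} = ⋂ i, {ω | f i ω ≤ t} := by
    ext ω
    simp [Finset.sup'_le_iff]
  rw [hinter]
  exact hf.meas_iInter fun i => ⟨Set.Iic t, measurableSet_Iic, rfl⟩

theorem fas_rsma_iid_outage_probability_general
    {Ω : Type*} [MeasurableSpace Ω] (P : Measure Ω)
    (gbar : ℝ) (N : ℕ) (hN : 1 ≤ N)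
    (g : Fin N → Ω → ℝ)
    (hindep : iIndepFun g P)
    (hcdf : ∀ i : Fin N, ∀ x : ℝ, 0 ≤ x →
      P {ω | g i ω ≤ x} = ENNReal.ofReal (1 - Real.exp (-x / gbar)))
    (hpos : ∀ i ω, 0 ≤ g i ω)
    (γbar L αc αp β γthc γthp : ℝ)
    (hγ : 0 < γbar) (hL : 0 < L) (hαc : αc ∈ Set.Ioo (0 : ℝ) 1)
    (hβ : 0 ≤ β) (hthc : 0 < γthc)
    (hcondc : (1 - αc) * γthc < αc) (hcondp : β * γthp < αp) :
    P {ω | ¬ ((γbar * αc * L *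
          (Finset.univ.sup' (Finset.univ_nonempty_iff.mpr ⟨⟨0, hN⟩⟩)
            (fun i => g i ω))) /
        (γbar * (1 - αc) * L *
          (Finset.univ.sup' (Finset.univ_nonempty_iff.mpr ⟨⟨0, hN⟩⟩)
            (fun i => g i ω)) + 1) > γthc ∧
        (γbar * αp * L *
          (Finset.univ.sup' (Finset.univ_nonempty_iff.mpr ⟨⟨0, hN⟩⟩)
            (fun i => g i ω))) /
        (γbar * β * L *
          (Finset.univ.sup' (Finset.univ_nonempty_iff.mpr ⟨⟨0, hN⟩⟩)
            (fun i => g i ω)) + 1) > γthp)} =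
      ENNReal.ofReal (1 - Real.exp
        (-(max (γthc / (γbar * L * (αc - (1 - αc) * γthc)))
               (γthp / (γbar * L * (αp - β * γthp)))) / gbar)) ^ N := by
  set hne : (Finset.univ : Finset (Fin N)).Nonempty := Finset.univ_nonempty_iff.mpr ⟨⟨0, hN⟩⟩
  set γth := max (γthc / (γbar * L * (αc - (1 - αc) * γthc)))
    (γthp / (γbar * L * (αp - β * γthp)))
  have hmax_nonneg : ∀ ω, 0 ≤ Finset.univ.sup' hne (fun i => g i ω) := fun ω =>
    (hpos ⟨0, hN⟩ ω).trans (Finset.le_sup' (fun i => g i ω) (Finset.mem_univ _))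
  have hγth : 0 ≤ γth :=
    (div_nonneg hthc.le (mul_pos (mul_pos hγ hL) (by linarith)).le).trans (le_max_left _ _)
  have houtage : {ω | ¬ ((γbar * αc * L * Finset.univ.sup' hne (fun i => g i ω)) /
        (γbar * (1 - αc) * L * Finset.univ.sup' hne (fun i => g i ω) + 1) > γthc ∧
      (γbar * αp * L * Finset.univ.sup' hne (fun i => g i ω)) /
        (γbar * β * L * Finset.univ.sup' hne (fun i => g i ω) + 1) > γthp)} =
      {ω | Finset.univ.sup' hne (fun i => g i ω) ≤ γth} := by
    ext ω
    simp only [Set.mem_ofPred_eq,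
      sinr_gt_iff hγ hL (sub_nonneg.2 hαc.2.le) (hmax_nonneg ω) hcondc,
      sinr_gt_iff hγ hL hβ (hmax_nonneg ω) hcondp, ← max_lt_iff, not_lt, γth]
  rw [houtage, hindep.measure_sup'_le, Finset.prod_congr rfl fun i _ => hcdf i γth hγth,
    Finset.prod_const, Finset.card_univ, Fintype.card_fin]

/-- Outage probability of a FAS-RSMA user with `N` independent
exponential port gains of mean `ḡ`: with equivalent gain `g = maxᵢ gᵢ`, the
probability that the common- or private-message SINR falls below its
threshold equals `(1 − e^{−γ_th/ḡ})^N`, where `γ_th` is the maximum of the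
two equivalent gain thresholds. -/
theorem fas_rsma_iid_outage_probability
    {Ω : Type*} [MeasurableSpace Ω] (P : Measure Ω) [IsProbabilityMeasure P]
    (gbar : ℝ) (hgbar : 0 < gbar) (N : ℕ) (hN : 1 ≤ N)
    (g : Fin N → Ω → ℝ) (hg : ∀ i, Measurable (g i))
    (hindep : iIndepFun g P)
    (hcdf : ∀ i : Fin N, ∀ x : ℝ, 0 ≤ x →
      P {ω | g i ω ≤ x} = ENNReal.ofReal (1 - Real.exp (-x / gbar)))
    (hpos : ∀ i ω, 0 ≤ g i ω)
    (γbar L αc αp β γthc γthp : ℝ)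
    (hγ : 0 < γbar) (hL : 0 < L) (hαc : αc ∈ Set.Ioo (0 : ℝ) 1)
    (hαp : 0 < αp) (hβ : 0 ≤ β) (hthc : 0 < γthc) (hthp : 0 < γthp)
    (hcondc : (1 - αc) * γthc < αc) (hcondp : β * γthp < αp) :
    P {ω | ¬ ((γbar * αc * L *
          (Finset.univ.sup' (Finset.univ_nonempty_iff.mpr ⟨⟨0, hN⟩⟩)
            (fun i => g i ω))) /
        (γbar * (1 - αc) * L *
          (Finset.univ.sup' (Finset.univ_nonempty_iff.mpr ⟨⟨0, hN⟩⟩)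
            (fun i => g i ω)) + 1) > γthc ∧
        (γbar * αp * L *
          (Finset.univ.sup' (Finset.univ_nonempty_iff.mpr ⟨⟨0, hN⟩⟩)
            (fun i => g i ω))) /
        (γbar * β * L *
          (Finset.univ.sup' (Finset.univ_nonempty_iff.mpr ⟨⟨0, hN⟩⟩)
            (fun i => g i ω)) + 1) > γthp)} =
      ENNReal.ofReal (1 - Real.exp
        (-(max (γthc / (γbar * L * (αc - (1 - αc) * γthc)))
               (γthp / (γbar * L * (αp - β * γthp)))) / gbar)) ^ N :=
  fas_rsma_iid_outage_probability_general P gbar N hN g hindep hcdf hpos γbar L αc αp β γthc γthp hγ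
    hL hαc hβ hthc hcondc hcondp
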